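/- With x̄(λ) = f_3(λ)(λf_1(λ) − 2f_2(λ))/(λ·f_2(λ)²), the quantity (1 − F(x̄(λ),λ))/λ² tends to 1/18 as λ → 0⁺. -/

import Mathlib

open Real Filter Set


/-- `f k x = e^x - ∑_{i=0}^{k-1} x^i / i!`. -/
noncomputable def f (k : ℕ) (x : ℝ) : ℝ :=
  Real.exp x - ∑ i ∈ Finset.range k, x ^ i / (Nat.factorial i : ℝ)

/-- The function `F(x, λ)` from the paper. -/
noncomputable def F (x lam : ℝ) : ℝ :=
  (x * lam ^ 5 * f 0 lam / (f 2 lam * f 3 lam) + lam ^ 4 * f 0 lam / (f 2 lam) ^ 2) /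
    (x * lam * f 2 lam / f 3 lam + lam * f 1 lam / f 2 lam) ^ 2

/-- The maximizer `x̄(λ) = f₃(λ)(λf₁(λ) - 2f₂(λ))/(λ f₂(λ)²)`. -/
noncomputable def xbar (lam : ℝ) : ℝ :=
  f 3 lam * (lam * f 1 lam - 2 * f 2 lam) / (lam * (f 2 lam) ^ 2)

lemma f0_eq (l : ℝ) : f 0 l = Real.exp l := by simp [f]
lemma f1_eq (l : ℝ) : f 1 l = Real.exp l - 1 := by norm_num [f, Finset.sum_range_succ]
lemma f2_eq (l : ℝ) : f 2 l = Real.exp l - 1 - l := by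
  norm_num [f, Finset.sum_range_succ]; ring
lemma f3_eq (l : ℝ) : f 3 l = Real.exp l - 1 - l - l^2/2 := by
  norm_num [f, Finset.sum_range_succ, Nat.factorial]; ring

lemma hb_pos {l : ℝ} (hl : 0 < l) : 0 < f 2 l := by
  have := Real.add_one_lt_exp hl.ne'
  rw [f2_eq]; linarith

lemma hc_pos {l : ℝ} (hl : 0 < l) : 0 < f 3 l := by
  have h := Real.sum_le_exp_of_nonneg hl.le 4
  have hsum : ∑ i ∈ Finset.range 4, l ^ i / (Nat.factorial i : ℝ)
      = 1 + l + l^2/2 + l^3/6 := by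
    norm_num [Finset.sum_range_succ, Nat.factorial]
  rw [hsum] at h
  have : 0 < l^3/6 := by positivity
  rw [f3_eq]; linarith

lemma hg_pos {l : ℝ} (hl : 0 < l) : 0 < l * f 1 l - f 2 l := by
  have h1 : -l + 1 < Real.exp (-l) := Real.add_one_lt_exp (by linarith)
  rw [Real.exp_neg] at h1
  have he : 0 < Real.exp l := Real.exp_pos l
  have h2 : (-l + 1) * Real.exp l < 1 := by
    have := (mul_lt_mul_of_pos_right h1 he)
    rwa [inv_mul_cancel₀ he.ne'] at this
  rw [f1_eq, f2_eq]; nlinarith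

lemma F_xbar_eq {l : ℝ} (hl : 0 < l) :
    F (xbar l) l = l^4 * Real.exp l / (4 * f 2 l * (l * f 1 l - f 2 l)) := by
  have hb := hb_pos hl
  have hc := hc_pos hl
  have hg := hg_pos hl
  have hstuff : xbar l * l * f 2 l / f 3 l + l * f 1 l / f 2 l
      = 2 * (l * f 1 l - f 2 l) / f 2 l := by
    rw [xbar]; field_simp; ring
  have hnum : xbar l * l ^ 5 * f 0 l / (f 2 l * f 3 l) + l ^ 4 * f 0 l / (f 2 l) ^ 2
      = l^4 * f 0 l * (l * f 1 l - f 2 l) / (f 2 l)^3 := by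
    rw [xbar]; field_simp; ring
  rw [F, hstuff, hnum, f0_eq]
  field_simp
  ring

lemma rem6 : Tendsto (fun x : ℝ =>
    (Real.exp x - (1 + x + x^2/2 + x^3/6 + x^4/24 + x^5/120 + x^6/720)) / x^6)
    (nhdsWithin 0 (Set.Ioi 0)) (nhds 0) := by
  apply squeeze_zero_norm' (a := fun x : ℝ => (8/35280) * x)
  · filter_upwards [Ioo_mem_nhdsGT_of_mem (⟨le_refl (0:ℝ), one_pos⟩ : (0:ℝ) ∈ Set.Ico 0 1)]
      with x hx
    have hax : |x| ≤ 1 := by rw [abs_of_pos hx.1]; exact hx.2.le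
    have h := Real.exp_bound hax (n := 7) (by norm_num)
    have hsum : ∑ m ∈ Finset.range 7, x ^ m / (Nat.factorial m : ℝ)
        = 1 + x + x^2/2 + x^3/6 + x^4/24 + x^5/120 + x^6/720 := by
      simp [Finset.sum_range_succ, Nat.factorial]
    rw [hsum, abs_of_pos hx.1] at h
    have hx6 : (0:ℝ) < x ^ 6 := pow_pos hx.1 6
    rw [norm_div, Real.norm_eq_abs, Real.norm_eq_abs, abs_of_pos hx6, div_le_iff₀ hx6]
    calc |Real.exp x - (1 + x + x^2/2 + x^3/6 + x^4/24 + x^5/120 + x^6/720)|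
        ≤ x ^ 7 * ((8:ℝ) / (5040 * 7)) := by convert h using 2 <;> norm_num
      _ = 8/35280 * x * x ^ 6 := by ring
  · have : Tendsto (fun x : ℝ => (8/35280) * x) (nhds 0) (nhds ((8/35280) * 0)) :=
      (continuous_const.mul continuous_id).tendsto 0
    simpa using this.mono_left nhdsWithin_le_nhds

lemma rem2 : Tendsto (fun x : ℝ =>
    (Real.exp x - (1 + x + x^2/2)) / x^2)
    (nhdsWithin 0 (Set.Ioi 0)) (nhds 0) := by
  apply squeeze_zero_norm' (a := fun x : ℝ => (4/12) * x)
  · filter_upwards [Ioo_mem_nhdsGT_of_mem (⟨le_refl (0:ℝ), one_pos⟩ : (0:ℝ) ∈ Set.Ico 0 1)]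
      with x hx
    have hax : |x| ≤ 1 := by rw [abs_of_pos hx.1]; exact hx.2.le
    have h := Real.exp_bound hax (n := 3) (by norm_num)
    have hsum : ∑ m ∈ Finset.range 3, x ^ m / (Nat.factorial m : ℝ)
        = 1 + x + x^2/2 := by
      simp [Finset.sum_range_succ, Nat.factorial]
    rw [hsum, abs_of_pos hx.1] at h
    have hx2 : (0:ℝ) < x ^ 2 := pow_pos hx.1 2
    rw [norm_div, Real.norm_eq_abs, Real.norm_eq_abs, abs_of_pos hx2, div_le_iff₀ hx2]
    calc |Real.exp x - (1 + x + x^2/2)|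
        ≤ x ^ 3 * ((4:ℝ) / (6 * 3)) := by convert h using 2 <;> norm_num
      _ ≤ 4/12 * x * x ^ 2 := by nlinarith [hx.1.le]
  · have : Tendsto (fun x : ℝ => (4/12) * x) (nhds 0) (nhds ((4/12) * 0)) :=
      (continuous_const.mul continuous_id).tendsto 0
    simpa using this.mono_left nhdsWithin_le_nhds

lemma hdouble : Tendsto (fun l : ℝ => 2 * l) (nhdsWithin 0 (Set.Ioi 0))
    (nhdsWithin 0 (Set.Ioi 0)) := by
  apply tendsto_nhdsWithin_of_tendsto_nhds_of_eventually_within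
  · have : Tendsto (fun l : ℝ => 2 * l) (nhds 0) (nhds (2 * 0)) :=
      (continuous_const.mul continuous_id).tendsto 0
    simpa using this.mono_left nhdsWithin_le_nhds
  · filter_upwards [self_mem_nhdsWithin] with x hx
    exact mul_pos two_pos (Set.mem_Ioi.mp hx)


lemma tendsto_within_of_cont {g : ℝ → ℝ} (hg : Continuous g) :
    Tendsto g (nhdsWithin 0 (Set.Ioi 0)) (nhds (g 0)) :=
  (hg.tendsto 0).mono_left (nhdsWithin_le_nhds (s := Set.Ioi 0))

set_option maxHeartbeats 1000000

/-- `(1 - F(x̄(λ), λ))/λ² → 1/18` as `λ → 0⁺`. -/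
theorem one_sub_F_xbar_tendsto_zero :
    Filter.Tendsto (fun lam : ℝ => (1 - F (xbar lam) lam) / lam ^ 2)
      (nhdsWithin 0 (Set.Ioi 0)) (nhds (1 / 18)) := by
  -- the doubled remainder
  have rem6d : Tendsto (fun l : ℝ =>
      (Real.exp (2*l) - (1 + 2*l + (2*l)^2/2 + (2*l)^3/6 + (2*l)^4/24 + (2*l)^5/120
        + (2*l)^6/720)) / (2*l)^6) (nhdsWithin 0 (Set.Ioi 0)) (nhds 0) := rem6.comp hdouble
  -- part 1: N(l)/l^6 → 1/18
  have h1 : Tendsto (fun l : ℝ =>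
      (4 * f 2 l * (l * f 1 l - f 2 l) - l^4 * Real.exp l) / l^6)
      (nhdsWithin 0 (Set.Ioi 0)) (nhds (1/18)) := by
    have hGlim : Tendsto (fun l : ℝ =>
        (1/18 + 7*l/45 - 17*l^2/360 - l^3/120 - l^4/720)
        + (4*l - 4) * (64 * ((Real.exp (2*l) - (1 + 2*l + (2*l)^2/2 + (2*l)^3/6
            + (2*l)^4/24 + (2*l)^5/120 + (2*l)^6/720)) / (2*l)^6))
        + (8 - 4*l^2 - l^4) *
            ((Real.exp l - (1 + l + l^2/2 + l^3/6 + l^4/24 + l^5/120 + l^6/720)) / l^6))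
        (nhdsWithin 0 (Set.Ioi 0)) (nhds (1/18)) := by
      have hp : Tendsto (fun l : ℝ => 1/18 + 7*l/45 - 17*l^2/360 - l^3/120 - l^4/720)
          (nhdsWithin 0 (Set.Ioi 0)) (nhds (1/18)) := by
        have h := tendsto_within_of_cont
          (g := fun l : ℝ => 1/18 + 7*l/45 - 17*l^2/360 - l^3/120 - l^4/720) (by continuity)
        norm_num at h
        convert h using 2
      have hc1 : Tendsto (fun l : ℝ => (4*l - 4)) (nhdsWithin 0 (Set.Ioi 0)) (nhds (-4)) := by
        have h := tendsto_within_of_cont (g := fun l : ℝ => 4*l - 4) (by continuity)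
        norm_num at h; exact h
      have hc2 : Tendsto (fun l : ℝ => (8 - 4*l^2 - l^4)) (nhdsWithin 0 (Set.Ioi 0))
          (nhds 8) := by
        have h := tendsto_within_of_cont (g := fun l : ℝ => 8 - 4*l^2 - l^4) (by continuity)
        norm_num at h; exact h
      have ht : Tendsto (fun l : ℝ => (64:ℝ) * ((Real.exp (2*l) - (1 + 2*l + (2*l)^2/2
          + (2*l)^3/6 + (2*l)^4/24 + (2*l)^5/120 + (2*l)^6/720)) / (2*l)^6))
          (nhdsWithin 0 (Set.Ioi 0)) (nhds 0) := by
        simpa using rem6d.const_mul (64:ℝ)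
      have := (hp.add ((hc1.mul ht))).add (hc2.mul rem6)
      norm_num at this ⊢
      exact this
    apply hGlim.congr'
    filter_upwards [self_mem_nhdsWithin] with l hl
    have hl' : (0:ℝ) < l := hl
    have hl6 : (l:ℝ)^6 ≠ 0 := pow_ne_zero 6 hl'.ne'
    have h64 : (64:ℝ) * ((Real.exp (2*l) - (1 + 2*l + (2*l)^2/2 + (2*l)^3/6
          + (2*l)^4/24 + (2*l)^5/120 + (2*l)^6/720)) / (2*l)^6)
        = (Real.exp (2*l) - (1 + 2*l + (2*l)^2/2 + (2*l)^3/6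
          + (2*l)^4/24 + (2*l)^5/120 + (2*l)^6/720)) / l^6 := by
      rw [show ((2:ℝ)*l)^6 = 64*l^6 from by ring]
      field_simp
    rw [h64, f1_eq, f2_eq, show (2:ℝ)*l = l + l from by ring, Real.exp_add]
    field_simp
    ring
  -- part 2: l^4/(4 b g) → 1
  have hB : Tendsto (fun l : ℝ => f 2 l / l^2) (nhdsWithin 0 (Set.Ioi 0)) (nhds (1/2)) := by
    have := (tendsto_const_nhds (x := (1/2:ℝ)) (f := nhdsWithin (0:ℝ) (Set.Ioi 0))).add rem2
    norm_num at this
    apply this.congr'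
    filter_upwards [self_mem_nhdsWithin] with l hl
    have hl' : (0:ℝ) < l := hl
    rw [f2_eq]
    field_simp
    ring
  have hGg : Tendsto (fun l : ℝ => (l * f 1 l - f 2 l) / l^2) (nhdsWithin 0 (Set.Ioi 0))
      (nhds (1/2)) := by
    have hpoly : Tendsto (fun l : ℝ => 1/2 + l/2) (nhdsWithin 0 (Set.Ioi 0)) (nhds (1/2)) := by
      have h := tendsto_within_of_cont (g := fun l : ℝ => 1/2 + l/2) (by continuity)
      norm_num at h; exact h
    have hcl : Tendsto (fun l : ℝ => l - 1) (nhdsWithin 0 (Set.Ioi 0)) (nhds (-1)) := by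
      have h := tendsto_within_of_cont (g := fun l : ℝ => l - 1) (by continuity)
      norm_num at h; exact h
    have := hpoly.add (hcl.mul rem2)
    norm_num at this
    apply this.congr'
    filter_upwards [self_mem_nhdsWithin] with l hl
    have hl' : (0:ℝ) < l := hl
    rw [f1_eq, f2_eq]
    field_simp
    ring
  have hprod : Tendsto (fun l : ℝ => 4 * (f 2 l / l^2) * ((l * f 1 l - f 2 l) / l^2))
      (nhdsWithin 0 (Set.Ioi 0)) (nhds 1) := by
    have := (hB.const_mul (4:ℝ)).mul hGg
    norm_num at this; exact this
  have h2 : Tendsto (fun l : ℝ => l^4 / (4 * f 2 l * (l * f 1 l - f 2 l)))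
      (nhdsWithin 0 (Set.Ioi 0)) (nhds 1) := by
    have hq := (tendsto_const_nhds (x := (1:ℝ))
      (f := nhdsWithin (0:ℝ) (Set.Ioi 0))).div hprod one_ne_zero
    norm_num at hq
    apply hq.congr'
    filter_upwards [self_mem_nhdsWithin] with l hl
    have hl' : (0:ℝ) < l := hl
    have hb := hb_pos hl'
    have hg := hg_pos hl'
    simp only [Pi.div_apply]
    field_simp
  -- combine
  have := h1.mul h2
  norm_num at this
  apply this.congr'
  filter_upwards [self_mem_nhdsWithin] with l hl
  have hl' : (0:ℝ) < l := hl
  have hb := hb_pos hl'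
  have hg := hg_pos hl'
  rw [F_xbar_eq hl']
  field_simp
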